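/- Let (N_j)_{j≥0} be a sequence of nonnegative-integer random variables with N_0 = 1 such that, conditionally on N_j, N_{j+1} stochastically dominates Binomial(N_j · n, δ), where n ∈ ℕ and δ ∈ (0,1) satisfy nδ/2 > 1 and q := 4/(δn) < 1. Then for every j ≥ 1, P(N_j ≥ (δn/2)^j) ≥ ∏_{i=1}^{j} (1 − q^i). -/

import Mathlib

/-!
Write `x = δn/2` and `Aⱼ = {x ^ j ≤ Nⱼ}`. On `{Nⱼ = k}` with `k ≥ x ^ j` the binomial
`Bin(kn, δ)` has mean `knδ ≥ 2 x ^ (j+1)`, so Chebyshev's inequality bounds the chance that it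
falls below `x ^ (j+1)` by `2 / x ^ (j+1) ≤ q ^ (j+1)`. Summing over `k` gives
`P(Aⱼ \ Aⱼ₊₁) ≤ q ^ (j+1) P(Aⱼ)`, hence `P(Aⱼ₊₁) ≥ (1 - q ^ (j+1)) P(Aⱼ)`, and the product
bound follows by induction from `P(A₀) = 1`.
-/

open MeasureTheory Finset

noncomputable def binomialLowerTail (m : ℕ) (δ a : ℝ) : ℝ :=
  ∑ i ∈ (range (m + 1)).filter (fun i : ℕ => (i : ℝ) < a),
    (m.choose i : ℝ) * δ ^ i * (1 - δ) ^ (m - i)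

lemma sum_choose_mul_sq_sub_mean (m : ℕ) (δ : ℝ) :
    ∑ i ∈ range (m + 1), (m.choose i : ℝ) * δ ^ i * (1 - δ) ^ (m - i) * (m * δ - i) ^ 2 =
      m * δ * (1 - δ) := by
  have h := congrArg (Polynomial.eval δ) (bernsteinPolynomial.variance ℝ m)
  simp only [Polynomial.eval_finsetSum, Polynomial.eval_mul, Polynomial.eval_pow,
    Polynomial.eval_sub, Polynomial.eval_X, Polynomial.eval_natCast,
    Polynomial.eval_one, bernsteinPolynomial, nsmul_eq_mul] at h
  rw [← h]
  exact sum_congr rfl fun i _ => by ring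

lemma binomialLowerTail_le_variance_div_sq {m : ℕ} {δ a : ℝ} (hδ0 : 0 ≤ δ) (hδ1 : δ ≤ 1)
    (ha : a < m * δ) :
    binomialLowerTail m δ a ≤ m * δ * (1 - δ) / (m * δ - a) ^ 2 := by
  have hc : 0 < (m * δ - a) ^ 2 := by nlinarith
  have hw : ∀ i, 0 ≤ (m.choose i : ℝ) * δ ^ i * (1 - δ) ^ (m - i) := fun i => by
    have : 0 ≤ 1 - δ := by linarith
    positivity
  rw [← sum_choose_mul_sq_sub_mean, sum_div, binomialLowerTail]
  calc _ ≤ ∑ i ∈ (range (m + 1)).filter (fun i : ℕ => (i : ℝ) < a),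
          (m.choose i : ℝ) * δ ^ i * (1 - δ) ^ (m - i) * (m * δ - i) ^ 2 / (m * δ - a) ^ 2 := by
        refine sum_le_sum fun i hi => ?_
        have hia : (i : ℝ) < a := (mem_filter.1 hi).2
        have hsq : (m * δ - a) ^ 2 ≤ (m * δ - i) ^ 2 := by nlinarith
        rw [mul_div_assoc]
        exact le_mul_of_one_le_right (hw i) ((one_le_div hc).2 hsq)
    _ ≤ _ := sum_le_sum_of_subset_of_nonneg (filter_subset _ _) fun i _ _ => by
        have := hw i
        positivity

lemma binomialLowerTail_le_two_div {m : ℕ} {δ a : ℝ} (hδ0 : 0 ≤ δ) (hδ1 : δ ≤ 1) (ha : 0 < a)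
    (hmean : 2 * a ≤ m * δ) : binomialLowerTail m δ a ≤ 2 / a := by
  set c : ℝ := m * δ
  have hc : 0 < c := by linarith
  calc _ ≤ c * (1 - δ) / (c - a) ^ 2 :=
        binomialLowerTail_le_variance_div_sq hδ0 hδ1 (by linarith)
    _ ≤ c / (c - a) ^ 2 := by
        gcongr
        nlinarith
    _ ≤ c / (c / 2) ^ 2 := by
        gcongr
        linarith
    _ = 4 / c := by field_simp; ring
    _ ≤ 2 / a := by
        rw [div_le_div_iff₀ hc ha]
        linarith

lemma binomialLowerTail_le_pow {n k j : ℕ} {δ : ℝ} (hδ0 : 0 ≤ δ) (hδ1 : δ ≤ 1)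
    (hn : 1 < δ * n / 2) (hk : (δ * n / 2) ^ j ≤ k) :
    binomialLowerTail (k * n) δ ((δ * n / 2) ^ (j + 1)) ≤ (4 / (δ * n)) ^ (j + 1) := by
  have hx : 0 < δ * n / 2 := by linarith
  have hmean : 2 * (δ * n / 2) ^ (j + 1) ≤ ((k * n : ℕ) : ℝ) * δ := by
    rw [pow_succ]
    push_cast
    nlinarith
  calc _ ≤ 2 / (δ * n / 2) ^ (j + 1) :=
        binomialLowerTail_le_two_div hδ0 hδ1 (by positivity) hmean
    _ ≤ 2 ^ (j + 1) / (δ * n / 2) ^ (j + 1) := by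
        gcongr
        exact le_self_pow₀ one_le_two (Nat.succ_ne_zero j)
    _ = (4 / (δ * n)) ^ (j + 1) := by
        rw [← div_pow]
        congr 1
        field_simp
        ring

section Measure

variable {Ω β : Type*} [MeasurableSpace Ω] {μ : Measure Ω}

lemma measure_preimage_inter_le_mul [MeasurableSpace β] [MeasurableSingletonClass β]
    [Countable β] {X : Ω → β} (hX : Measurable X) {S : Set β} {t : Set Ω} {p : ENNReal}
    (h : ∀ k ∈ S, μ (X ⁻¹' {k} ∩ t) ≤ μ (X ⁻¹' {k}) * p) :
    μ (X ⁻¹' S ∩ t) ≤ μ (X ⁻¹' S) * p := by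
  have hcover : X ⁻¹' S ∩ t ⊆ ⋃ k : S, X ⁻¹' {(k : β)} ∩ t :=
    fun ω ⟨hω, hωt⟩ => Set.mem_iUnion.2 ⟨⟨X ω, hω⟩, rfl, hωt⟩
  calc μ (X ⁻¹' S ∩ t) ≤ ∑' k : S, μ (X ⁻¹' {(k : β)} ∩ t) :=
        (measure_mono hcover).trans (measure_iUnion_le _)
    _ ≤ ∑' k : S, μ (X ⁻¹' {(k : β)}) * p := ENNReal.tsum_le_tsum fun k => h k k.2
    _ = μ (X ⁻¹' S) * p := by
        rw [ENNReal.tsum_mul_right,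
          tsum_measure_preimage_singleton S.to_countable fun k _ => hX (measurableSet_singleton k)]

lemma ofReal_mul_one_sub_le_measure [IsFiniteMeasure μ] {s t : Set Ω} {P p : ℝ} (hp0 : 0 ≤ p)
    (hp1 : p ≤ 1) (hs : ENNReal.ofReal P ≤ μ s) (hst : μ (s \ t) ≤ μ s * ENNReal.ofReal p) :
    ENNReal.ofReal (P * (1 - p)) ≤ μ t := by
  rw [ENNReal.ofReal_le_iff_le_toReal (measure_ne_top μ t)]
  have hsP : P ≤ μ.real s := (ENNReal.ofReal_le_iff_le_toReal (measure_ne_top μ s)).1 hs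
  have hdiff : μ.real (s \ t) ≤ μ.real s * p := by
    simpa [Measure.real, ENNReal.toReal_mul, ENNReal.toReal_ofReal hp0] using
      ENNReal.toReal_mono (by finiteness) hst
  have hsplit : μ.real s - μ.real t ≤ μ.real (s \ t) := le_measureReal_sdiff
  change P * (1 - p) ≤ μ.real t
  nlinarith

end Measure

theorem level_by_level_chebyshev_general
    {Ω : Type*} [MeasurableSpace Ω] (μ : Measure Ω) [IsProbabilityMeasure μ]
    (N : ℕ → Ω → ℕ) (hmeas : ∀ j, Measurable (N j)) (hN0 : ∀ ω, N 0 ω = 1)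
    (n : ℕ) (δ : ℝ) (hδ : δ ∈ Set.Ioo (0 : ℝ) 1)
    (hn : 1 < δ * n / 2) (hq : 4 / (δ * n) < 1)
    (hdom : ∀ j k (a : ℝ),
      μ {ω | N j ω = k ∧ (N (j + 1) ω : ℝ) < a} ≤
        μ {ω | N j ω = k} *
          ENNReal.ofReal (∑ i ∈ (Finset.range (k * n + 1)).filter
              (fun i : ℕ => (i : ℝ) < a),
            (Nat.choose (k * n) i : ℝ) * δ ^ i * (1 - δ) ^ (k * n - i)))
    (j : ℕ) :
    ENNReal.ofReal (∏ i ∈ Finset.Icc 1 j, (1 - (4 / (δ * n)) ^ i)) ≤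
      μ {ω | (δ * n / 2) ^ j ≤ (N j ω : ℝ)} := by
  induction j with
  | zero => simp [hN0]
  | succ j ih =>
    rw [prod_Icc_succ_top (Nat.le_add_left 1 j)]
    have hq0 : 0 ≤ 4 / (δ * n) := by have := hδ.1; positivity
    refine ofReal_mul_one_sub_le_measure (pow_nonneg hq0 _) (pow_le_one₀ hq0 hq.le) ih ?_
    have hdiff : {ω | (δ * n / 2) ^ j ≤ (N j ω : ℝ)} \
          {ω | (δ * n / 2) ^ (j + 1) ≤ (N (j + 1) ω : ℝ)} =
        N j ⁻¹' {k : ℕ | (δ * n / 2) ^ j ≤ (k : ℝ)} ∩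
          {ω | (N (j + 1) ω : ℝ) < (δ * n / 2) ^ (j + 1)} := by
      ext ω
      simp
    rw [hdiff]
    exact measure_preimage_inter_le_mul (hmeas j) fun k hk => (hdom j k _).trans <|
      mul_le_mul_right (ENNReal.ofReal_le_ofReal (binomialLowerTail_le_pow hδ.1.le hδ.2.le hn hk)) _

/-- Level-by-level Chebyshev estimate: if `N 0 = 1` and conditionally on
`N j = k`, `N (j+1)` stochastically dominates `Binomial(k·n, δ)`, with
`nδ/2 > 1` and `q = 4/(δn) < 1`, then
`P(N j ≥ (δn/2)^j) ≥ ∏_{i=1}^j (1 - q^i)`. -/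
theorem level_by_level_chebyshev
    {Ω : Type*} [MeasurableSpace Ω] (μ : Measure Ω) [IsProbabilityMeasure μ]
    (N : ℕ → Ω → ℕ) (hmeas : ∀ j, Measurable (N j)) (hN0 : ∀ ω, N 0 ω = 1)
    (n : ℕ) (δ : ℝ) (hδ : δ ∈ Set.Ioo (0 : ℝ) 1)
    (hn : 1 < δ * n / 2) (hq : 4 / (δ * n) < 1)
    (hdom : ∀ j k (a : ℝ),
      μ {ω | N j ω = k ∧ (N (j + 1) ω : ℝ) < a} ≤
        μ {ω | N j ω = k} *
          ENNReal.ofReal (∑ i ∈ (Finset.range (k * n + 1)).filter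
              (fun i : ℕ => (i : ℝ) < a),
            (Nat.choose (k * n) i : ℝ) * δ ^ i * (1 - δ) ^ (k * n - i)))
    (j : ℕ) (hj : 1 ≤ j) :
    ENNReal.ofReal (∏ i ∈ Finset.Icc 1 j, (1 - (4 / (δ * n)) ^ i)) ≤
      μ {ω | (δ * n / 2) ^ j ≤ (N j ω : ℝ)} :=
  level_by_level_chebyshev_general μ N hmeas hN0 n δ hδ hn hq hdom j
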